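/- Let η_X and η_Y be real random variables, Z a random variable independent of the pair (η_X, η_Y), and define X := g(Z, η_X) for a measurable function g. Then η_Y is conditionally independent of X given η_X. -/

import Mathlib

/-!
Since `Z` is independent of `σ(η_X, η_Y)`, for `A ∈ σ(η_Y)`, `B ∈ σ(Z)` and `C ∈ σ(η_X)` the
tower property through `σ(η_X, η_Y)` gives `P(A ∩ B ∩ C | η_X) = 1_C · P(B) · P(A | η_X)`,
which factors as `P(A | η_X) · P(B ∩ C | η_X)`. The sets `B ∩ C` form a π-system generating
`σ(Z) ⊔ σ(η_X)`, so `η_Y` is conditionally independent of `σ(Z, η_X)` given `η_X`, and `X` is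
measurable with respect to that σ-algebra.
-/

open MeasureTheory ProbabilityTheory MeasurableSpace

section PiSystem

variable {Ω : Type*}

lemma isPiSystem_image2_inter_measurableSet (m₁ m₂ : MeasurableSpace Ω) :
    IsPiSystem (Set.image2 (· ∩ ·) {s | MeasurableSet[m₁] s} {t | MeasurableSet[m₂] t}) := by
  rintro _ ⟨s₁, hs₁, t₁, ht₁, rfl⟩ _ ⟨s₂, hs₂, t₂, ht₂, rfl⟩ -
  exact ⟨s₁ ∩ s₂, hs₁.inter hs₂, t₁ ∩ t₂, ht₁.inter ht₂, Set.inter_inter_inter_comm _ _ _ _⟩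

lemma generateFrom_image2_inter_measurableSet (m₁ m₂ : MeasurableSpace Ω) :
    generateFrom (Set.image2 (· ∩ ·) {s | MeasurableSet[m₁] s} {t | MeasurableSet[m₂] t}) =
      m₁ ⊔ m₂ := by
  refine le_antisymm (generateFrom_le ?_) (sup_le (fun s hs => ?_) (fun t ht => ?_))
  · rintro _ ⟨s, hs, t, ht, rfl⟩
    exact (le_sup_left (b := m₂) s hs).inter (le_sup_right (a := m₁) t ht)
  · exact measurableSet_generateFrom ⟨s, hs, Set.univ, MeasurableSet.univ, Set.inter_univ s⟩
  · exact measurableSet_generateFrom ⟨Set.univ, MeasurableSet.univ, t, ht, Set.univ_inter t⟩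

end PiSystem

section CondExp

variable {Ω : Type*} {m m₀ m₁ m₂ mΩ : MeasurableSpace Ω} {μ : Measure Ω} [IsFiniteMeasure μ]
  {s t : Set Ω}

lemma condExp_inter_ae_eq_indicator (hs : MeasurableSet s) (ht : MeasurableSet[m] t) :
    μ⟦s ∩ t | m⟧ =ᵐ[μ] t.indicator (μ⟦s | m⟧) := by
  rw [Set.inter_comm, ← Set.indicator_indicator]
  exact condExp_indicator ((integrable_const 1).indicator hs) ht

lemma condExp_indicator_ae_eq_measureReal_of_indep (hindep : Indep m₀ m μ) (hm₀ : m₀ ≤ mΩ)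
    (hm : m ≤ mΩ) (hs : MeasurableSet[m₀] s) :
    μ⟦s | m⟧ =ᵐ[μ] fun _ => μ.real s := by
  refine (condExp_indep_eq hm₀ hm (stronglyMeasurable_const.indicator hs) hindep).trans ?_
  rw [integral_indicator_const _ (hm₀ s hs), smul_eq_mul, mul_one]

lemma condExp_inter_ae_eq_smul_of_indep (hindep : Indep m₀ m₂ μ) (hm₀ : m₀ ≤ mΩ)
    (hm₂ : m₂ ≤ mΩ) (hm : m ≤ m₂) (hs : MeasurableSet[m₂] s) (ht : MeasurableSet[m₀] t) :
    μ⟦s ∩ t | m⟧ =ᵐ[μ] μ.real t • μ⟦s | m⟧ := by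
  have h₂ : μ⟦s ∩ t | m₂⟧ =ᵐ[μ] μ.real t • s.indicator (fun _ => (1 : ℝ)) := by
    rw [Set.inter_comm]
    filter_upwards [condExp_inter_ae_eq_indicator (hm₀ t ht) hs,
      condExp_indicator_ae_eq_measureReal_of_indep hindep hm₀ hm₂ ht] with ω hω₁ hω₂
    rw [hω₁]
    by_cases hω : ω ∈ s <;> simp [hω, hω₂]
  calc μ⟦s ∩ t | m⟧ =ᵐ[μ] μ[μ⟦s ∩ t | m₂⟧ | m] := (condExp_condExp_of_le hm hm₂).symm
    _ =ᵐ[μ] μ[μ.real t • s.indicator (fun _ => (1 : ℝ)) | m] := condExp_congr_ae h₂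
    _ =ᵐ[μ] μ.real t • μ⟦s | m⟧ := condExp_smul _ _ _

theorem condIndep_sup_right_of_indep [StandardBorelSpace Ω] (hindep : Indep m₀ m₂ μ)
    (hm₀ : m₀ ≤ mΩ) (hm₂ : m₂ ≤ mΩ) (hm : m ≤ m₂) (hm₁ : m₁ ≤ m₂) :
    CondIndep m m₁ (m₀ ⊔ m) (hm.trans hm₂) μ := by
  refine CondIndepSets.condIndep (hm₁.trans hm₂) (sup_le hm₀ (hm.trans hm₂))
    (@isPiSystem_measurableSet Ω m₁) (isPiSystem_image2_inter_measurableSet m₀ m)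
    (@generateFrom_measurableSet Ω m₁).symm (generateFrom_image2_inter_measurableSet m₀ m).symm ?_
  refine (condIndepSets_iff _ _ _ _ (fun s hs => hm₂ s (hm₁ s hs)) ?_ μ).2 ?_
  · rintro _ ⟨t, ht, c, hc, rfl⟩
    exact (hm₀ t ht).inter (hm₂ c (hm c hc))
  rintro s _ hs ⟨t, ht, c, hc, rfl⟩
  have hs₂ : MeasurableSet[m₂] s := hm₁ s hs
  filter_upwards [condExp_inter_ae_eq_indicator ((hm₂ s hs₂).inter (hm₀ t ht)) hc,
    condExp_inter_ae_eq_indicator (hm₀ t ht) hc,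
    condExp_inter_ae_eq_smul_of_indep hindep hm₀ hm₂ hm hs₂ ht,
    condExp_indicator_ae_eq_measureReal_of_indep (indep_of_indep_of_le_right hindep hm) hm₀
      (hm.trans hm₂) ht] with ω hstc htc hst ht'
  rw [← Set.inter_assoc, hstc, Pi.mul_apply, htc]
  by_cases hω : ω ∈ c <;> simp [hω, hst, ht', mul_comm]

end CondExp

/-- If `Z` is independent of the pair `(η_X, η_Y)` and `X := g(Z, η_X)`, then
`η_Y` is conditionally independent of `X` given `η_X`. -/
theorem condIndep_outcome_noise_given_treatment_noise
    {Ω : Type*} [MeasurableSpace Ω] [StandardBorelSpace Ω]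
    (μ : Measure Ω) [IsProbabilityMeasure μ]
    (Z ηX ηY : Ω → ℝ) (hZ : Measurable Z) (hηX : Measurable ηX) (hηY : Measurable ηY)
    (hindep : IndepFun Z (fun ω => (ηX ω, ηY ω)) μ)
    (g : ℝ → ℝ → ℝ) (hg : Measurable (Function.uncurry g))
    (X : Ω → ℝ) (hX : ∀ ω, X ω = g (Z ω) (ηX ω)) :
    CondIndepFun (MeasurableSpace.comap ηX (by infer_instance))
      (measurable_iff_comap_le.mp hηX) ηY X μ := by
  have hnoise : CondIndep (MeasurableSpace.comap ηX inferInstance)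
      (MeasurableSpace.comap ηY inferInstance)
      (MeasurableSpace.comap Z inferInstance ⊔ MeasurableSpace.comap ηX inferInstance)
      hηX.comap_le μ := by
    have hpair := comap_measurable (m := inferInstance) fun ω => (ηX ω, ηY ω)
    exact condIndep_sup_right_of_indep hindep hZ.comap_le (hηX.prodMk hηY).comap_le
      (measurable_fst.comp hpair).comap_le (measurable_snd.comp hpair).comap_le
  have hX_le : MeasurableSpace.comap X inferInstance ≤
      MeasurableSpace.comap Z inferInstance ⊔ MeasurableSpace.comap ηX inferInstance := by
    rw [funext hX, ← comap_prodMk]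
    exact (hg.comp (comap_measurable fun ω => (Z ω, ηX ω))).comap_le
  rw [condIndepFun_iff_condIndep]
  exact condIndep_of_condIndep_of_le_right hnoise hX_le
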